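/- Let Ω = [0,1] with the Borel σ-algebra and ℙ the Lebesgue measure, let 𝒢 = {G} with G ≡ 1, and ℋ = {H₁, H₂} where H₁(ω) = 1 + 1_{[1/2,1]}(ω) and H₂(ω) = 1 + 1_{[0,1/2]}(ω). Then V(1) = 2/3, whereas inf_{a ≥ 0} { a + min(𝔼[(1 − aH₁)⁺], 𝔼[(1 − aH₂)⁺]) } = 3/4. Hence the dual representation V(x) = inf_{a ≥ 0} { xa + inf over 𝒢 × co(ℋ) of 𝔼[(G − aH)⁺] } fails if co(ℋ) is replaced by ℋ itself. -/

import Mathlib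

open MeasureTheory

namespace QH

variable {Ω : Type*} [MeasurableSpace Ω]

/-- The set of nonnegative measurable random variables. -/
def L0plus (Ω : Type*) [MeasurableSpace Ω] : Set (Ω → ℝ) :=
  {f | Measurable f ∧ ∀ ω, 0 ≤ f ω}

/-- A randomized test: a measurable function with values in `[0,1]`. -/
def IsRandTest (X : Ω → ℝ) : Prop :=
  Measurable X ∧ ∀ ω, X ω ∈ Set.Icc (0 : ℝ) 1

/-- The feasible randomized tests for significance level `x` and null collection `H`. -/
def Tests (μ : Measure Ω) (H : Set (Ω → ℝ)) (x : ℝ) : Set (Ω → ℝ) :=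
  {X | IsRandTest X ∧ ∀ h ∈ H, ∫ ω, h ω * X ω ∂μ ≤ x}

/-- The worst-case power of a test `X` over the alternative collection `G`. -/
noncomputable def powerInf (μ : Measure Ω) (G : Set (Ω → ℝ)) (X : Ω → ℝ) : ℝ :=
  sInf ((fun g => ∫ ω, g ω * X ω ∂μ) '' G)

/-- The value of the randomized composite hypothesis testing problem. -/
noncomputable def V (μ : Measure Ω) (G H : Set (Ω → ℝ)) (x : ℝ) : ℝ :=
  sSup (powerInf μ G '' Tests μ H x)

/-- The value of the pure composite hypothesis testing problem. -/
noncomputable def V1 (μ : Measure Ω) (G H : Set (Ω → ℝ)) (x : ℝ) : ℝ :=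
  sSup (powerInf μ G '' {X ∈ Tests μ H x | ∀ ω, X ω = 0 ∨ X ω = 1})

/-- The set `ℋₓ` of nonnegative random variables that satisfy the budget
constraint against every feasible randomized test. -/
def HxSet (μ : Measure Ω) (H : Set (Ω → ℝ)) (x : ℝ) : Set (Ω → ℝ) :=
  {h | h ∈ L0plus Ω ∧ ∀ X ∈ Tests μ H x, ∫ ω, h ω * X ω ∂μ ≤ x}

/-- A set of (nonnegative) random variables is closed under convergence in probability,
as a subset of `L⁰⁺`. -/
def ClosedInProb (μ : Measure Ω) (S : Set (Ω → ℝ)) : Prop :=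
  ∀ (f : ℕ → Ω → ℝ) (g : Ω → ℝ), (∀ n, f n ∈ S) → g ∈ L0plus Ω →
    TendstoInMeasure μ f Filter.atTop g → g ∈ S

/-- The closure of a set of random variables under convergence in probability. -/
def clProb (μ : Measure Ω) (S : Set (Ω → ℝ)) : Set (Ω → ℝ) :=
  {g | ∃ f : ℕ → Ω → ℝ, (∀ n, f n ∈ S) ∧ TendstoInMeasure μ f Filter.atTop g}

/-- Assumption (A1): `𝒢, ℋ ⊆ L⁰⁺`, `sup_{X ∈ 𝒢∪ℋ} 𝔼[X] < ∞`, and `𝒢` is convex and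
closed under convergence in probability. -/
def A1 (μ : Measure Ω) (G H : Set (Ω → ℝ)) : Prop :=
  G ⊆ L0plus Ω ∧ H ⊆ L0plus Ω ∧ (∀ f ∈ G ∪ H, Integrable f μ) ∧
  BddAbove ((fun f => ∫ ω, f ω ∂μ) '' (G ∪ H)) ∧
  Convex ℝ G ∧ ClosedInProb μ G

/-- The smallest σ-algebra making every random variable in `G ∪ H` measurable. -/
def sigmaGen (G H : Set (Ω → ℝ)) : MeasurableSpace Ω :=
  ⨆ f ∈ G ∪ H, MeasurableSpace.comap f inferInstance

/-- The Neyman–Pearson conditions at level `x` for the tuple `(Ĝ, Ĥ, â, X̂, B)`. -/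
def NPconds (μ : Measure Ω) (G H : Set (Ω → ℝ)) (x : ℝ)
    (Ghat Hhat : Ω → ℝ) (ahat : ℝ) (Xhat B : Ω → ℝ) : Prop :=
  Ghat ∈ G ∧ Hhat ∈ clProb μ (convexHull ℝ H) ∧ 0 ≤ ahat ∧ Xhat ∈ Tests μ H x ∧
  Measurable B ∧ (∀ ω, B ω ∈ Set.Icc (0 : ℝ) 1) ∧
  (∀ ω, Xhat ω = (if ahat * Hhat ω < Ghat ω then 1 else 0)
      + B ω * (if Ghat ω = ahat * Hhat ω then 1 else 0)) ∧
  (∀ h ∈ H, ∫ ω, h ω * Xhat ω ∂μ ≤ ∫ ω, Hhat ω * Xhat ω ∂μ) ∧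
  (∫ ω, Hhat ω * Xhat ω ∂μ = x) ∧
  (∀ g ∈ G, ∫ ω, Ghat ω * Xhat ω ∂μ ≤ ∫ ω, g ω * Xhat ω ∂μ)

end QH


/-!
Since `H₁ + H₂ ≥ 3` on `[0,1]`, every feasible test satisfies `3 𝔼[X] ≤ 𝔼[H₁X] + 𝔼[H₂X] ≤ 2`,
and the constant test `2/3` is feasible, so `V(1) = 2/3`. Each `Hᵢ` takes the values `1` and `2`
on halves of `[0,1]`, so `𝔼[(1 - aHᵢ)⁺] = ((1 - 2a)⁺ + (1 - a)⁺)/2` for both `i`, and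
`a ↦ a + ((1 - 2a)⁺ + (1 - a)⁺)/2` is minimal at `a = 1/2`, with value `3/4`. The gap comes from
the mixture `(H₁ + H₂)/2 ≡ 3/2` in `co(ℋ)`, which is not in `ℋ`.
-/

open Set

namespace QH

variable {Ω : Type*} [MeasurableSpace Ω] {μ : Measure Ω}

lemma powerInf_singleton (g X : Ω → ℝ) : powerInf μ {g} X = ∫ ω, g ω * X ω ∂μ := by
  rw [powerInf, image_singleton, csInf_singleton]

lemma IsRandTest.norm_le_one {X : Ω → ℝ} (hX : IsRandTest X) (ω : Ω) : ‖X ω‖ ≤ 1 := by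
  rw [Real.norm_of_nonneg (hX.2 ω).1]
  exact (hX.2 ω).2

lemma IsRandTest.integrable [IsFiniteMeasure μ] {X : Ω → ℝ} (hX : IsRandTest X) :
    Integrable X μ :=
  Integrable.of_bound hX.1.aestronglyMeasurable 1 (ae_of_all _ hX.norm_le_one)

lemma IsRandTest.integrable_mul {X h : Ω → ℝ} (hX : IsRandTest X) (hh : Integrable h μ) :
    Integrable (fun ω => h ω * X ω) μ :=
  hh.mul_bdd hX.1.aestronglyMeasurable (ae_of_all _ hX.norm_le_one)

lemma IsRandTest.const_mul_integral_le [IsFiniteMeasure μ] {X h₁ h₂ : Ω → ℝ} {c : ℝ}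
    (hX : IsRandTest X) (hh₁ : Integrable h₁ μ) (hh₂ : Integrable h₂ μ)
    (hc : ∀ᵐ ω ∂μ, c ≤ h₁ ω + h₂ ω) :
    c * ∫ ω, X ω ∂μ ≤ ∫ ω, h₁ ω * X ω ∂μ + ∫ ω, h₂ ω * X ω ∂μ := by
  have hX₁ := hX.integrable_mul hh₁
  have hX₂ := hX.integrable_mul hh₂
  rw [← integral_const_mul, ← integral_add hX₁ hX₂]
  refine integral_mono_ae (hX.integrable.const_mul c) (hX₁.add hX₂) ?_
  filter_upwards [hc] with ω hω
  rw [← add_mul]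
  exact mul_le_mul_of_nonneg_right hω (hX.2 ω).1

end QH

section HalfIndicators

variable {Ω : Type*} [MeasurableSpace Ω] {μ : Measure Ω} {S T : Set Ω}

lemma integral_comp_indicator_one [IsFiniteMeasure μ] (hS : MeasurableSet S) (φ : ℝ → ℝ) :
    ∫ ω, φ (S.indicator (fun _ => (1 : ℝ)) ω) ∂μ = μ.real S * φ 1 + μ.real Sᶜ * φ 0 := by
  classical
  have hφ : (fun ω => φ (S.indicator (fun _ => (1 : ℝ)) ω))
      = S.piecewise (fun _ => φ 1) (fun _ => φ 0) := by
    ext ω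
    by_cases hω : ω ∈ S <;> simp [hω]
  rw [hφ, integral_piecewise hS (integrable_const _).integrableOn
    (integrable_const _).integrableOn, setIntegral_const, setIntegral_const, smul_eq_mul,
    smul_eq_mul]

lemma ae_three_le_one_add_indicator_add (hST : ∀ᵐ ω ∂μ, ω ∈ S ∪ T) :
    ∀ᵐ ω ∂μ, 3 ≤ (1 + S.indicator (fun _ => (1 : ℝ)) ω)
      + (1 + T.indicator (fun _ => (1 : ℝ)) ω) := by
  filter_upwards [hST] with ω hω
  have hS₀ : 0 ≤ S.indicator (fun _ => (1 : ℝ)) ω := indicator_nonneg (by simp) ω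
  have hT₀ : 0 ≤ T.indicator (fun _ => (1 : ℝ)) ω := indicator_nonneg (by simp) ω
  rcases hω with h | h
  · rw [indicator_of_mem h]; linarith
  · rw [indicator_of_mem h]; linarith

variable [IsProbabilityMeasure μ]

lemma integral_one_add_indicator_mul_two_thirds (hS : MeasurableSet S) (hS₂ : μ.real S = 1 / 2) :
    ∫ ω, (1 + S.indicator (fun _ => (1 : ℝ)) ω) * (2 / 3) ∂μ = 1 := by
  rw [integral_comp_indicator_one hS (fun t => (1 + t) * (2 / 3)),
    probReal_compl_eq_one_sub hS, hS₂]
  norm_num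

lemma integral_posPart_one_sub_mul_one_add_indicator (hS : MeasurableSet S)
    (hS₂ : μ.real S = 1 / 2) (a : ℝ) :
    ∫ ω, max (1 - a * (1 + S.indicator (fun _ => (1 : ℝ)) ω)) 0 ∂μ
      = (max (1 - 2 * a) 0 + max (1 - a) 0) / 2 := by
  rw [integral_comp_indicator_one hS (fun t => max (1 - a * (1 + t)) 0),
    probReal_compl_eq_one_sub hS, hS₂]
  ring_nf

lemma V_one_add_indicator_eq (hS : MeasurableSet S) (hT : MeasurableSet T)
    (hS₂ : μ.real S = 1 / 2) (hT₂ : μ.real T = 1 / 2) (hST : ∀ᵐ ω ∂μ, ω ∈ S ∪ T) :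
    QH.V μ {fun _ => 1} {fun ω => 1 + S.indicator (fun _ => (1 : ℝ)) ω,
      fun ω => 1 + T.indicator (fun _ => (1 : ℝ)) ω} 1 = 2 / 3 := by
  have hSi : Integrable (fun ω => 1 + S.indicator (fun _ => (1 : ℝ)) ω) μ :=
    (integrable_const 1).add ((integrable_const 1).indicator hS)
  have hTi : Integrable (fun ω => 1 + T.indicator (fun _ => (1 : ℝ)) ω) μ :=
    (integrable_const 1).add ((integrable_const 1).indicator hT)
  have hconst : (fun _ => (2 / 3 : ℝ)) ∈ QH.Tests μ
      {fun ω => 1 + S.indicator (fun _ => (1 : ℝ)) ω,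
        fun ω => 1 + T.indicator (fun _ => (1 : ℝ)) ω} 1 := by
    refine ⟨⟨measurable_const, fun _ => ⟨by norm_num, by norm_num⟩⟩, ?_⟩
    rintro h (rfl | rfl | -)
    exacts [(integral_one_add_indicator_mul_two_thirds hS hS₂).le,
      (integral_one_add_indicator_mul_two_thirds hT hT₂).le]
  refine IsGreatest.csSup_eq ⟨⟨_, hconst, ?_⟩, ?_⟩
  · simp [QH.powerInf_singleton]
  · rintro _ ⟨X, ⟨hX, hXH⟩, rfl⟩
    rw [QH.powerInf_singleton]
    have h3 := hX.const_mul_integral_le hSi hTi (ae_three_le_one_add_indicator_add hST)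
    have hS₁ := hXH _ (mem_insert _ _)
    have hT₁ := hXH _ (mem_insert_of_mem _ rfl)
    simp only [one_mul] at hS₁ hT₁ ⊢
    linarith

end HalfIndicators

lemma sInf_add_posPart_eq_three_quarters :
    sInf ((fun a : ℝ => a + (max (1 - 2 * a) 0 + max (1 - a) 0) / 2) '' Ici 0) = 3 / 4 := by
  refine IsLeast.csInf_eq ⟨⟨1 / 2, by norm_num, by norm_num⟩, ?_⟩
  rintro _ ⟨a, -, rfl⟩
  rcases le_total a (1 / 2) with h | h
  · linarith [le_max_left (1 - 2 * a) 0, le_max_left (1 - a) 0]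
  · linarith [le_max_right (1 - 2 * a) 0, le_max_left (1 - a) 0]

lemma volume_restrict_unitInterval_real_Icc {a b : ℝ} (ha : 0 ≤ a) (hab : a ≤ b) (hb : b ≤ 1) :
    (volume.restrict (Icc (0 : ℝ) 1)).real (Icc a b) = b - a := by
  rw [measureReal_restrict_apply measurableSet_Icc, Icc_inter_Icc, max_eq_left ha,
    min_eq_left hb, Real.volume_real_Icc_of_le hab]

/-- On `Ω = [0,1]` with Lebesgue measure, `𝒢 = {1}` and `ℋ = {H₁, H₂}`
where `H₁ = 1 + 1_{[1/2,1]}` and `H₂ = 1 + 1_{[0,1/2]}`, we have `V(1) = 2/3`, whereas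
`inf_{a ≥ 0} { a + min(𝔼[(1 − aH₁)⁺], 𝔼[(1 − aH₂)⁺]) } = 3/4 > 2/3 = V(1)`: the dual
representation fails if `co(ℋ)` is replaced by `ℋ`. -/
theorem stmt_18 :
    let μ : MeasureTheory.Measure ℝ := MeasureTheory.volume.restrict (Set.Icc 0 1)
    let H1 : ℝ → ℝ := fun ω => 1 + Set.indicator (Set.Icc (1 / 2 : ℝ) 1) (fun _ => (1 : ℝ)) ω
    let H2 : ℝ → ℝ := fun ω => 1 + Set.indicator (Set.Icc (0 : ℝ) (1 / 2)) (fun _ => (1 : ℝ)) ω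
    QH.V μ {fun _ => 1} {H1, H2} 1 = 2 / 3 ∧
    sInf ((fun a => a + min (∫ ω, max (1 - a * H1 ω) 0 ∂μ)
        (∫ ω, max (1 - a * H2 ω) 0 ∂μ)) '' Set.Ici (0 : ℝ)) = 3 / 4 ∧
    QH.V μ {fun _ => 1} {H1, H2} 1 <
      sInf ((fun a => a + min (∫ ω, max (1 - a * H1 ω) 0 ∂μ)
        (∫ ω, max (1 - a * H2 ω) 0 ∂μ)) '' Set.Ici (0 : ℝ)) := by
  dsimp only
  have : IsProbabilityMeasure (volume.restrict (Icc (0 : ℝ) 1)) :=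
    ⟨by simp [Real.volume_Icc]⟩
  have hS₂ : (volume.restrict (Icc (0 : ℝ) 1)).real (Icc (1 / 2) 1) = 1 / 2 := by
    rw [volume_restrict_unitInterval_real_Icc] <;> norm_num
  have hT₂ : (volume.restrict (Icc (0 : ℝ) 1)).real (Icc 0 (1 / 2)) = 1 / 2 := by
    rw [volume_restrict_unitInterval_real_Icc] <;> norm_num
  have hcover : ∀ᵐ ω ∂(volume.restrict (Icc (0 : ℝ) 1)), ω ∈ Icc (1 / 2) 1 ∪ Icc 0 (1 / 2) := by
    filter_upwards [ae_restrict_mem measurableSet_Icc] with ω hω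
    rcases le_total ω (1 / 2) with h | h
    exacts [Or.inr ⟨hω.1, h⟩, Or.inl ⟨h, hω.2⟩]
  rw [V_one_add_indicator_eq measurableSet_Icc measurableSet_Icc hS₂ hT₂ hcover]
  simp only [integral_posPart_one_sub_mul_one_add_indicator measurableSet_Icc hS₂,
    integral_posPart_one_sub_mul_one_add_indicator measurableSet_Icc hT₂, min_self,
    sInf_add_posPart_eq_three_quarters]
  norm_num
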